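/- Let a > 0 and γ > 0, and let x be real. Define the associated Charlier polynomials 𝓒_n(x; a, γ) by the recurrence a·𝓒_{n+1} = (n+γ+a−x)·𝓒_n − (n+γ)·𝓒_{n−1}, 𝓒_{−1} = 0, 𝓒_0 = 1. Then the explicit formula 𝓒_n(x; a, γ) = [(γ+1)_n / n!] · Σ_{k=0}^n (−a)^{−k} [(−n)_k (γ−x)_k / (γ+1)_k] · Σ_{j=0}^{n−k} [(k−n)_j (γ−x+k)_j (γ)_j] / [(γ−x)_j (γ+k+1)_j j!] holds for all n ≥ 0, provided γ − x is not a nonpositive integer ≥ −(n−1) (so denominators are nonzero). -/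

import Mathlib

/-- Pochhammer symbol (rising factorial) of a real number. -/
noncomputable def poch (a : ℝ) (k : ℕ) : ℝ := ∏ i ∈ Finset.range k, (a + i)

/-- Charlier polynomials \(C_n(x;a)\). -/
noncomputable def charlier (a x : ℝ) (n : ℕ) : ℝ :=
  ∑ k ∈ Finset.range (n + 1),
    poch (-(n : ℝ)) k * poch (-x) k / (Nat.factorial k) * (-1 / a) ^ k

/-- The associated Charlier polynomials, defined by their three-term recurrence
(with association parameter γ and the convention 𝓒₋₁ = 0, 𝓒₀ = 1). -/
def IsAssocCharlier (a γ : ℝ) (C : ℕ → ℝ → ℝ) : Prop :=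
  (∀ x, C 0 x = 1) ∧
  (∀ x, a * C 1 x = γ + a - x) ∧
  (∀ x, ∀ n : ℕ,
    a * C (n + 2) x =
      ((n : ℝ) + 1 + γ + a - x) * C (n + 1) x - ((n : ℝ) + 1 + γ) * C n x)

/-!
Write `c = γ - x` and `(r choose d)` for the generalised binomial coefficient, so that
`(γ + m + 1)_{n-m} / (n-m)! = (γ + n choose n - m)`. Regrouping the double sum by `m = k + j`
turns the right-hand side into `D n = ∑_{i + d = n} (-1)^i (γ + n choose d) B i`, where
`B m = ∑_{k + j = m} (-1/a)^k (c + j)_k (γ)_j / j!`. The sequence `B` satisfies the first-order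
recurrence `a B (m+1) = a (γ)_{m+1}/(m+1)! - (c + m) B m`, and the alternating Chu–Vandermonde
sum `∑_{i + d = n} (-γ choose i) (γ + n choose d) = 1` absorbs its inhomogeneous part, leaving
`a D (n+1) = a + T n` for an explicit sum `T n`. Pascal's rule and the absorption identity
`(d+1) (r+1 choose d+1) = (r+1) (r choose d)` turn `T (n+1) - T n` into exactly the three-term
recurrence of the associated Charlier polynomials for `D`, and a solution of that recurrence is
determined by its first two terms.
-/

open Finset Polynomial

@[simp]
lemma poch_zero (a : ℝ) : poch a 0 = 1 := prod_range_zero _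

lemma poch_succ (a : ℝ) (k : ℕ) : poch a (k + 1) = poch a k * (a + k) := by
  simp [poch, prod_range_succ]

lemma poch_add (a : ℝ) (k j : ℕ) : poch a (k + j) = poch a k * poch (a + k) j := by
  rw [poch, poch, poch, prod_range_add]
  simp only [Nat.cast_add, add_assoc]

lemma poch_pos {a : ℝ} (h : 0 < a) (k : ℕ) : 0 < poch a k :=
  prod_pos fun i _ => by positivity

lemma poch_eq_eval_ascPochhammer (a : ℝ) (k : ℕ) : poch a k = (ascPochhammer ℝ k).eval a := by
  induction k with
  | zero => simp
  | succ k ih => rw [poch_succ, ih, ascPochhammer_succ_eval]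

lemma poch_neg_natCast_mul_factorial {n k : ℕ} (h : k ≤ n) :
    poch (-(n : ℝ)) k * (n - k).factorial = (-1) ^ k * n.factorial := by
  rw [poch_eq_eval_ascPochhammer, ascPochhammer_eval_neg_eq_descPochhammer,
    descPochhammer_eval_eq_descFactorial, ← Nat.factorial_mul_descFactorial h]
  push_cast
  ring

lemma factorial_mul_multichoose_eq_poch (a : ℝ) (k : ℕ) :
    k.factorial * Ring.multichoose a k = poch a k := by
  rw [← nsmul_eq_mul, Ring.factorial_nsmul_multichoose_eq_ascPochhammer,
    ascPochhammer_smeval_eq_eval, poch_eq_eval_ascPochhammer]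

lemma factorial_mul_choose_eq_poch (r : ℝ) (k : ℕ) :
    k.factorial * Ring.choose r k = poch (r - k + 1) k :=
  factorial_mul_multichoose_eq_poch _ _

section Binomial

variable {R : Type*} [CommRing R] [BinomialRing R]

lemma Ring.succ_mul_choose_add_one (r : R) (k : ℕ) :
    (k + 1) * Ring.choose (r + 1) (k + 1) = (r + 1) * Ring.choose r k := by
  have h := Ring.choose_add_smul_choose r k 1
  rw [Nat.choose_one_right, nsmul_eq_mul, Ring.choose_one_right] at h
  push_cast at h
  exact h

lemma Ring.sum_antidiagonal_neg_one_pow_mul_multichoose_mul_choose (r : R) (n : ℕ) :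
    ∑ p ∈ antidiagonal n,
      (-1) ^ p.1 * Ring.multichoose r p.1 * Ring.choose (r + n) p.2 = 1 := by
  have h := Ring.add_choose_eq (r := -r) (s := r + n) n (Commute.all _ _)
  rw [neg_add_cancel_left, Ring.choose_natCast, Nat.choose_self, Nat.cast_one] at h
  refine (sum_congr rfl fun p _ => ?_).trans h.symm
  rw [Ring.choose_neg', Units.smul_def, zsmul_eq_mul, Int.cast_negOnePow_natCast, mul_assoc]

end Binomial

lemma IsAssocCharlier.unique {a γ : ℝ} {C C' : ℕ → ℝ → ℝ} (ha : a ≠ 0)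
    (hC : IsAssocCharlier a γ C) (hC' : IsAssocCharlier a γ C') (n : ℕ) (x : ℝ) :
    C n x = C' n x := by
  induction n using Nat.twoStepInduction with
  | zero => rw [hC.1, hC'.1]
  | one => exact mul_left_cancel₀ ha ((hC.2.1 x).trans (hC'.2.1 x).symm)
  | more n ih₀ ih₁ => exact mul_left_cancel₀ ha (by rw [hC.2.2, hC'.2.2, ih₀, ih₁])

namespace AssocCharlier

variable (a γ c : ℝ)

noncomputable def coeff (m : ℕ) : ℝ :=
  ∑ p ∈ antidiagonal m, (-1 / a) ^ p.1 * poch (c + p.2) p.1 * Ring.multichoose γ p.2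

noncomputable def explicitSum (n : ℕ) : ℝ :=
  ∑ p ∈ antidiagonal n, (-1) ^ p.1 * Ring.choose (γ + n) p.2 * coeff a γ c p.1

noncomputable def tail (n : ℕ) : ℝ :=
  ∑ p ∈ antidiagonal n,
    (-1) ^ p.1 * (c + p.1) * Ring.choose (γ + (n + 1 : ℕ)) p.2 * coeff a γ c p.1

variable {a γ c}

@[simp]
lemma coeff_zero : coeff a γ c 0 = 1 := by
  simp [coeff]

lemma mul_coeff_succ (ha : a ≠ 0) (m : ℕ) :
    a * coeff a γ c (m + 1) = a * Ring.multichoose γ (m + 1) - (c + m) * coeff a γ c m := by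
  rw [coeff, Nat.sum_antidiagonal_succ, coeff, mul_add, mul_sum, mul_sum]
  simp only [pow_zero, one_mul, poch_zero]
  rw [sub_eq_add_neg, ← sum_neg_distrib]
  congr 1
  refine sum_congr rfl fun p hp => ?_
  have hm : (p.1 : ℝ) + p.2 = m := by exact_mod_cast mem_antidiagonal.mp hp
  have ha' : a * (-1 / a) = -1 := by field_simp
  rw [poch_succ, pow_succ]
  linear_combination (-1 / a) ^ p.1 * poch (c + p.2) p.1 * Ring.multichoose γ p.2 *
    ((c + p.2 + p.1) * ha' - hm)

lemma mul_explicitSum_succ (ha : a ≠ 0) (n : ℕ) :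
    a * explicitSum a γ c (n + 1) = a + tail a γ c n := by
  have hV := Ring.sum_antidiagonal_neg_one_pow_mul_multichoose_mul_choose γ (n + 1)
  rw [Nat.sum_antidiagonal_succ] at hV
  calc a * explicitSum a γ c (n + 1)
      = a * ((-1) ^ 0 * Ring.multichoose γ 0 * Ring.choose (γ + (n + 1 : ℕ)) (n + 1) +
          ∑ p ∈ antidiagonal n, (-1) ^ (p.1 + 1) * Ring.multichoose γ (p.1 + 1) *
            Ring.choose (γ + (n + 1 : ℕ)) p.2) + tail a γ c n := by
        rw [explicitSum, tail, Nat.sum_antidiagonal_succ, mul_add, mul_add, mul_sum, mul_sum,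
          add_assoc, ← sum_add_distrib]
        congr 1
        · simp
        · refine sum_congr rfl fun p _ => ?_
          linear_combination (-1) ^ (p.1 + 1) * Ring.choose (γ + (n + 1 : ℕ)) p.2 *
            mul_coeff_succ (γ := γ) (c := c) ha p.1
    _ = _ := by rw [hV, mul_one]

lemma tail_succ_sub_tail (n : ℕ) :
    tail a γ c (n + 1) - tail a γ c n =
    (n + 1 + c) * explicitSum a γ c (n + 1) - (n + 1 + γ) * explicitSum a γ c n := by
  have hterm : ∀ p ∈ antidiagonal n,
      (-1) ^ p.1 * (c + p.1) * Ring.choose (γ + (n + 1 + 1 : ℕ)) (p.2 + 1) * coeff a γ c p.1 -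
        (-1) ^ p.1 * (c + p.1) * Ring.choose (γ + (n + 1 : ℕ)) p.2 * coeff a γ c p.1 =
      (n + 1 + c) * ((-1) ^ p.1 * Ring.choose (γ + (n + 1 : ℕ)) (p.2 + 1) * coeff a γ c p.1) -
        (n + 1 + γ) * ((-1) ^ p.1 * Ring.choose (γ + n) p.2 * coeff a γ c p.1) := by
    intro p hp
    have hn : (p.1 : ℝ) + p.2 = n := by exact_mod_cast mem_antidiagonal.mp hp
    have hpascal := Ring.choose_succ_succ (γ + (n + 1 : ℕ)) p.2
    rw [show γ + (n + 1 : ℕ) + 1 = γ + (n + 1 + 1 : ℕ) by push_cast; ring] at hpascal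
    have habsorb : ((p.2 : ℝ) + 1) * Ring.choose (γ + (n + 1 : ℕ)) (p.2 + 1) =
        (γ + n + 1) * Ring.choose (γ + n) p.2 := by
      rw [Nat.cast_succ, ← add_assoc]
      exact Ring.succ_mul_choose_add_one _ _
    linear_combination (-1) ^ p.1 * coeff a γ c p.1 *
      ((c + p.1) * hpascal - habsorb + Ring.choose (γ + (n + 1 : ℕ)) (p.2 + 1) * hn)
  rw [tail, tail, Nat.sum_antidiagonal_succ', explicitSum, explicitSum,
    Nat.sum_antidiagonal_succ', add_sub_assoc, ← sum_sub_distrib, sum_congr rfl hterm,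
    sum_sub_distrib, ← mul_sum, ← mul_sum]
  simp only [Ring.choose_zero_right]
  push_cast
  ring

lemma mul_explicitSum_add_two (ha : a ≠ 0) (n : ℕ) :
    a * explicitSum a γ c (n + 2) =
      (n + 1 + c + a) * explicitSum a γ c (n + 1) - (n + 1 + γ) * explicitSum a γ c n := by
  linear_combination mul_explicitSum_succ ha (n + 1) - mul_explicitSum_succ ha n +
    tail_succ_sub_tail (a := a) (γ := γ) (c := c) n

lemma isAssocCharlier_explicitSum (ha : a ≠ 0) :
    IsAssocCharlier a γ fun n x => explicitSum a γ (γ - x) n := by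
  refine ⟨fun x => by simp [explicitSum], fun x => ?_, fun x n => ?_⟩
  · have h := mul_explicitSum_succ (γ := γ) (c := γ - x) ha 0
    simp only [tail, Nat.antidiagonal_zero, sum_singleton, coeff_zero, Ring.choose_zero_right] at h
    linear_combination h
  · linear_combination mul_explicitSum_add_two (γ := γ) (c := γ - x) ha n

lemma doubleSum_term_eq (hγ : 0 < γ) {n k j : ℕ} (hkj : k + j ≤ n) (hc : poch c j ≠ 0) :
    poch (γ + 1) n / n.factorial * ((-a) ^ (-(k : ℤ)) *
      (poch (-(n : ℝ)) k * poch c k / poch (γ + 1) k) *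
      (poch ((k : ℝ) - n) j * poch (c + k) j * poch γ j /
        (poch c j * poch (γ + k + 1) j * j.factorial))) =
    (-1) ^ (k + j) * Ring.choose (γ + n) (n - (k + j)) *
      ((-1 / a) ^ k * poch (c + j) k * Ring.multichoose γ j) := by
  obtain ⟨d, rfl⟩ : ∃ d, n = k + j + d := ⟨n - (k + j), by omega⟩
  rw [Nat.add_sub_cancel_left]
  have hpow : (-a) ^ (-(k : ℤ)) = (-1 / a) ^ k := by
    rw [zpow_neg, zpow_natCast, ← inv_pow, inv_neg, neg_div, one_div]
  have hγ1 : poch (γ + 1) (k + j + d) =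
      poch (γ + 1) k * poch (γ + k + 1) j * poch (γ + (k + j : ℕ) + 1) d := by
    rw [poch_add, poch_add]
    push_cast
    ring_nf
  have hsign : poch (-((k + j + d : ℕ) : ℝ)) k * poch ((k : ℝ) - (k + j + d : ℕ)) j *
      d.factorial = (-1) ^ (k + j) * (k + j + d).factorial := by
    rw [← poch_neg_natCast_mul_factorial (Nat.le_add_right (k + j) d), poch_add,
      Nat.add_sub_cancel_left]
    ring_nf
  have hc' : poch c k * poch (c + k) j = poch c j * poch (c + j) k := by
    rw [← poch_add, ← poch_add, add_comm]
  have hchoose := factorial_mul_choose_eq_poch (γ + (k + j + d : ℕ)) d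
  rw [show γ + ((k + j + d : ℕ) : ℝ) - d + 1 = γ + (k + j : ℕ) + 1 by push_cast; ring]
    at hchoose
  have h₁ : poch (γ + 1) k ≠ 0 := (poch_pos (by positivity) k).ne'
  have h₂ : poch (γ + k + 1) j ≠ 0 := (poch_pos (by positivity) j).ne'
  rw [hpow, hγ1, ← hchoose, ← factorial_mul_multichoose_eq_poch γ j]
  field_simp
  linear_combination
    Ring.choose (γ + (k + j + d : ℕ)) d * (-(1 / a)) ^ k * Ring.multichoose γ j *
      (poch c k * poch (c + k) j * hsign + (-1) ^ (k + j) * (k + j + d).factorial * hc')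

lemma doubleSum_eq_explicitSum (hγ : 0 < γ) {n : ℕ} (hc : ∀ j < n, c + j ≠ 0) :
    poch (γ + 1) n / n.factorial * ∑ k ∈ range (n + 1),
      (-a) ^ (-(k : ℤ)) * (poch (-(n : ℝ)) k * poch c k / poch (γ + 1) k) *
        ∑ j ∈ range (n - k + 1), poch ((k : ℝ) - n) j * poch (c + k) j * poch γ j /
          (poch c j * poch (γ + k + 1) j * j.factorial) =
    explicitSum a γ c n := by
  set G : ℕ → ℕ → ℝ := fun k j => (-1) ^ (k + j) * Ring.choose (γ + n) (n - (k + j)) *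
    ((-1 / a) ^ k * poch (c + j) k * Ring.multichoose γ j)
  calc _ = ∑ k ∈ range (n + 1), ∑ j ∈ range (n + 1 - k), G k j := by
        rw [mul_sum]
        refine sum_congr rfl fun k hk => ?_
        rw [mul_sum, mul_sum, ← Nat.sub_add_comm (Nat.lt_succ_iff.mp (mem_range.mp hk))]
        refine sum_congr rfl fun j hj => doubleSum_term_eq hγ ?_ ?_
        · have := mem_range.mp hj
          omega
        · exact prod_ne_zero_iff.mpr fun i hi =>
            hc i ((mem_range.mp hi).trans_le (by have := mem_range.mp hj; omega))
    _ = ∑ m ∈ range (n + 1), ∑ k ∈ range (m + 1), G k (m - k) :=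
        (sum_range_diag_flip _ _).symm
    _ = explicitSum a γ c n := by
        rw [explicitSum, Nat.sum_antidiagonal_eq_sum_range_succ
          (fun i d => (-1) ^ i * Ring.choose (γ + n) d * coeff a γ c i)]
        refine sum_congr rfl fun m hm => ?_
        rw [coeff, Nat.sum_antidiagonal_eq_sum_range_succ
          (fun k j => (-1 / a) ^ k * poch (c + j) k * Ring.multichoose γ j), mul_sum]
        refine sum_congr rfl fun k hk => ?_
        simp only [G, Nat.add_sub_cancel' (Nat.lt_succ_iff.mp (mem_range.mp hk))]

end AssocCharlier

theorem assoc_charlier_explicit (a γ x : ℝ) (ha : 0 < a) (hγ : 0 < γ)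
    (C : ℕ → ℝ → ℝ) (hC : IsAssocCharlier a γ C) (n : ℕ)
    (hx : ∀ j : ℕ, j < n → γ - x + j ≠ 0) :
    C n x = poch (γ + 1) n / (Nat.factorial n) *
      ∑ k ∈ Finset.range (n + 1),
        (-a) ^ (-(k : ℤ)) * (poch (-(n : ℝ)) k * poch (γ - x) k / poch (γ + 1) k) *
          ∑ j ∈ Finset.range (n - k + 1),
            poch ((k : ℝ) - n) j * poch (γ - x + k) j * poch γ j /
              (poch (γ - x) j * poch (γ + k + 1) j * (Nat.factorial j)) := by
  rw [AssocCharlier.doubleSum_eq_explicitSum hγ hx]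
  exact hC.unique ha.ne' (AssocCharlier.isAssocCharlier_explicitSum ha.ne') n x
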